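/- Let σ > 0, r ≥ 0, T > 0. Define Π(v,t) = (1/v)·exp(−r(T−t) − 2v/(σ²(T−t))) for v > 0, t < T, and regard Π as a function of (S,v,t), constant in S. Then Π is a classical solution of the Heston pricing equation (vS²/2)·V_SS + σvS·V_Sv + (vσ²/2)·V_vv + rS·V_S + σ²·V_v − rV + V_t = 0 at every point with S > 0, v > 0, 0 ≤ t < T. -/

import Mathlib

open Real

/-- The Heston–Loewenstein–Willard function
`Π(v,t) = (1/v)·exp(−r(T−t) − 2v/(σ²(T−t)))`, regarded as a function of
`(S,v,t)` constant in `S`. -/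
noncomputable def HLWV (σ r T : ℝ) (S v t : ℝ) : ℝ :=
  (1 / v) * Real.exp (-(r * (T - t)) - 2 * v / (σ ^ 2 * (T - t)))

/-- `Π`, regarded as a function of `(S,v,t)` constant in `S`,
is a classical solution of the Heston pricing equation
`(vS²/2)V_SS + σvS·V_Sv + (vσ²/2)V_vv + rS·V_S + σ²·V_v − rV + V_t = 0`
at every point with `S > 0`, `v > 0`, `0 ≤ t < T`. -/
theorem hlw_solves_heston_equation (σ r T : ℝ) (hσ : 0 < σ) (hr : 0 ≤ r)
    (hT : 0 < T) (S v t : ℝ) (hS : 0 < S) (hv : 0 < v) (ht0 : 0 ≤ t)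
    (htT : t < T) :
    ∃ pS pSS pSv pv pvv pt : ℝ,
      HasDerivAt (fun S' => HLWV σ r T S' v t) pS S ∧
      HasDerivAt (deriv fun S' => HLWV σ r T S' v t) pSS S ∧
      HasDerivAt (fun v' => deriv (fun S' => HLWV σ r T S' v' t) S) pSv v ∧
      HasDerivAt (fun v' => HLWV σ r T S v' t) pv v ∧
      HasDerivAt (deriv fun v' => HLWV σ r T S v' t) pvv v ∧
      HasDerivAt (fun t' => HLWV σ r T S v t') pt t ∧
      v * S ^ 2 / 2 * pSS + σ * v * S * pSv + v * σ ^ 2 / 2 * pvv +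
        r * S * pS + σ ^ 2 * pv - r * HLWV σ r T S v t + pt = 0 := by
  have hv' : v ≠ 0 := ne_of_gt hv
  have hσ' : σ ≠ 0 := ne_of_gt hσ
  have hτ : (0:ℝ) < T - t := sub_pos.mpr htT
  have hτ' : T - t ≠ 0 := ne_of_gt hτ
  have hc : σ ^ 2 * (T - t) ≠ 0 := mul_ne_zero (pow_ne_zero 2 hσ') hτ'
  set k : ℝ := -(2 * 1 / (σ ^ 2 * (T - t))) with hk
  -- exponent derivative in v
  have hg : ∀ u : ℝ, HasDerivAt
      (fun u' : ℝ => -(r * (T - t)) - 2 * u' / (σ ^ 2 * (T - t))) k u := by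
    intro u
    exact (((hasDerivAt_id u).const_mul 2).div_const _).const_sub _
  -- v-derivative at any u ≠ 0
  have hf : ∀ u : ℝ, u ≠ 0 → HasDerivAt (fun v' => HLWV σ r T S v' t)
      (-(u ^ 2)⁻¹ * Real.exp (-(r * (T - t)) - 2 * u / (σ ^ 2 * (T - t)))
        + u⁻¹ * (Real.exp (-(r * (T - t)) - 2 * u / (σ ^ 2 * (T - t))) * k)) u := by
    intro u hu
    have h := (hasDerivAt_inv hu).mul ((hg u).exp)
    simpa only [HLWV, one_div, Pi.mul_def] using h
  -- S-constancy
  have hS1 : HasDerivAt (fun S' => HLWV σ r T S' v t) 0 S := hasDerivAt_const _ _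
  have hS2 : HasDerivAt (deriv fun S' => HLWV σ r T S' v t) 0 S := by
    have : (deriv fun S' : ℝ => HLWV σ r T S' v t) = fun _ => (0:ℝ) := by
      rw [show (fun S' : ℝ => HLWV σ r T S' v t) = fun _ => HLWV σ r T S v t from rfl,
        deriv_const']
    rw [this]; exact hasDerivAt_const _ _
  have hS3 : HasDerivAt (fun v' => deriv (fun S' => HLWV σ r T S' v' t) S) 0 v := by
    have : (fun v' => deriv (fun S' : ℝ => HLWV σ r T S' v' t) S) = fun _ => (0:ℝ) := by
      funext v'
      rw [show (fun S' : ℝ => HLWV σ r T S' v' t) = fun _ => HLWV σ r T S v' t from rfl]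
      exact deriv_const _ _
    rw [this]; exact hasDerivAt_const _ _
  -- first v derivative
  have hpv := hf v hv'
  -- second v derivative
  set Dv : ℝ → ℝ := fun u =>
    -(u ^ 2)⁻¹ * Real.exp (-(r * (T - t)) - 2 * u / (σ ^ 2 * (T - t)))
      + u⁻¹ * (Real.exp (-(r * (T - t)) - 2 * u / (σ ^ 2 * (T - t))) * k) with hDvdef
  have hev : (deriv fun v' => HLWV σ r T S v' t) =ᶠ[nhds v] Dv := by
    filter_upwards [eventually_gt_nhds hv] with u hu
    exact (hf u (ne_of_gt hu)).deriv
  have hA : HasDerivAt (fun u : ℝ =>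
      -(u ^ 2)⁻¹ * Real.exp (-(r * (T - t)) - 2 * u / (σ ^ 2 * (T - t))))
      (-(-((2:ℕ) * v ^ 1) / (v ^ 2) ^ 2) *
        Real.exp (-(r * (T - t)) - 2 * v / (σ ^ 2 * (T - t)))
        + -(v ^ 2)⁻¹ * (Real.exp (-(r * (T - t)) - 2 * v / (σ ^ 2 * (T - t))) * k)) v :=
    (((hasDerivAt_pow 2 v).inv (pow_ne_zero 2 hv')).neg).mul ((hg v).exp)
  have hB : HasDerivAt (fun u : ℝ =>
      u⁻¹ * (Real.exp (-(r * (T - t)) - 2 * u / (σ ^ 2 * (T - t))) * k))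
      (-(v ^ 2)⁻¹ * (Real.exp (-(r * (T - t)) - 2 * v / (σ ^ 2 * (T - t))) * k)
        + v⁻¹ * (Real.exp (-(r * (T - t)) - 2 * v / (σ ^ 2 * (T - t))) * k * k)) v :=
    (hasDerivAt_inv hv').mul (((hg v).exp).mul_const k)
  have hpvv : HasDerivAt (deriv fun v' => HLWV σ r T S v' t) _ v :=
    (hA.add hB).congr_of_eventuallyEq hev
  -- t derivative
  have h1 : HasDerivAt (fun t' : ℝ => T - t') (-1) t := by
    simpa using (hasDerivAt_id t).const_sub T
  have h4 : HasDerivAt (fun t' : ℝ => 2 * v / (σ ^ 2 * (T - t')))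
      ((0 * (σ ^ 2 * (T - t)) - 2 * v * (σ ^ 2 * -1)) / (σ ^ 2 * (T - t)) ^ 2) t :=
    (hasDerivAt_const t (2 * v)).div (h1.const_mul (σ ^ 2)) hc
  have hpt : HasDerivAt (fun t' => HLWV σ r T S v t')
      (1 / v * (Real.exp (-(r * (T - t)) - 2 * v / (σ ^ 2 * (T - t))) *
        (-(r * -1) - (0 * (σ ^ 2 * (T - t)) - 2 * v * (σ ^ 2 * -1)) / (σ ^ 2 * (T - t)) ^ 2))) t := by
    have h := ((((h1.const_mul r).neg).sub h4).exp).const_mul (1 / v)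
    exact h
  refine ⟨_, _, _, _, _, _, hS1, hS2, hS3, hpv, hpvv, hpt, ?_⟩
  simp only [HLWV, hk]
  push_cast
  field_simp
  ring
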